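/- For the diffusion x(t) = e^{-tL}δ_{u0} on the star graph on N vertices with u0 the center, x(t) = [(1 + e^{-2t})/2, (1 - e^{-2t})/(2√(N-1)), …]^T, and its spreads Δ_s²(x(t)) = 2e^{-4t}/(1 + e^{-4t}) and Δ_{g,u0}²(x(t)) = (1 - e^{-2t})²/(2(1 + e^{-4t})) satisfy (Δ_s² - 1)² + (2Δ_{g,u0}² - 1)² = 1, i.e., the diffusion exactly achieves the star-graph uncertainty curve for all t ≥ 0. -/

import Mathlib

/-!
The normalized Laplacian of the star has eigenvalue `0` on `(1, 1/√(N-1), …)` (the square root of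
the degrees) and eigenvalue `2` on `(1, -1/√(N-1), …)` (the graph is bipartite); `δ_{u₀}` is half
their sum, so `x(t)` stays a vector constant on the leaves and is given in closed form. On such
vectors both quadratic forms reduce to one-variable expressions: with `e = e^{-2t}`, the squared
norm is `(1 + e²)/2`, the `L`-form is `e²` and the `P`-form is `(1 - e)²/4`, and the curve
identity is then a rational identity in `e`.
-/

open Matrix Real

section MatrixExp

attribute [local instance] Matrix.linftyOpNormedAddCommGroup Matrix.linftyOpNormedRing
  Matrix.linftyOpNormedAlgebra

theorem Matrix.exp_mulVec_of_mulVec_eq_smul {𝕂 n : Type*} [RCLike 𝕂] [Fintype n] [DecidableEq n]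
    {M : Matrix n n 𝕂} {c : 𝕂} {v : n → 𝕂} (h : M *ᵥ v = c • v) :
    NormedSpace.exp M *ᵥ v = NormedSpace.exp c • v := by
  have hpow (k : ℕ) : (M ^ k) *ᵥ v = c ^ k • v := by
    induction k with
    | zero => simp
    | succ k ih => rw [pow_succ, ← mulVec_mulVec, h, mulVec_smul, ih, smul_smul, pow_succ']
  have hM := (NormedSpace.exp_series_hasSum_exp' (𝕂 := 𝕂) M).map (mulVec.addMonoidHomLeft v)
    (continuous_id.matrix_mulVec continuous_const)
  have hc := (NormedSpace.exp_series_hasSum_exp' (𝕂 := 𝕂) c).smul_const v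
  refine hM.unique (hc.congr_fun fun k => ?_)
  simp [mulVec.addMonoidHomLeft, smul_mulVec, hpow, smul_smul]

end MatrixExp

def starVec (R : Type*) (N : ℕ) (a b : R) : Fin N → R := fun i => if (i : ℕ) = 0 then a else b

section StarVec
variable {R : Type*} {N : ℕ}

lemma starVec_add [Add R] (a b c d : R) :
    starVec R N a b + starVec R N c d = starVec R N (a + c) (b + d) := by
  ext i; simp only [starVec, Pi.add_apply]; split_ifs <;> rfl

lemma smul_starVec [Mul R] (c a b : R) :
    c • starVec R N a b = starVec R N (c * a) (c * b) := by
  ext i; simp only [starVec, Pi.smul_apply, smul_eq_mul]; split_ifs <;> rfl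

lemma sum_starVec [Ring R] [NeZero N] (a b : R) :
    ∑ i, starVec R N a b i = a + ((N : R) - 1) * b := by
  obtain ⟨M, rfl⟩ := Nat.exists_eq_succ_of_ne_zero (NeZero.ne N)
  simp [Fin.sum_univ_succ, starVec]

lemma starVec_dotProduct_starVec [Ring R] [NeZero N] (a b c d : R) :
    starVec R N a b ⬝ᵥ starVec R N c d = a * c + ((N : R) - 1) * (b * d) := by
  rw [dotProduct, ← sum_starVec]
  congr 1; ext i; simp only [starVec]; split_ifs <;> rfl

lemma pi_single_eq_starVec [Zero R] [One R] {u : Fin N} (hu : (u : ℕ) = 0) :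
    Pi.single u 1 = starVec R N 1 0 := by
  ext i
  have hiu : i = u ↔ (i : ℕ) = 0 := by rw [Fin.ext_iff, hu]
  simp only [Pi.single_apply, hiu, starVec]

lemma sum_starVec_sq [Ring R] [NeZero N] (a b : R) :
    ∑ i, starVec R N a b i ^ 2 = a ^ 2 + ((N : R) - 1) * b ^ 2 := by
  simp only [sq]
  exact starVec_dotProduct_starVec a b a b

lemma diagonal_starVec_mulVec_starVec [NonUnitalNonAssocSemiring R] (a b c d : R) :
    diagonal (starVec R N a b) *ᵥ starVec R N c d = starVec R N (a * c) (b * d) := by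
  ext i; simp only [mulVec_diagonal, starVec]; split_ifs <;> rfl

end StarVec

noncomputable def starNormalizedLaplacian (N : ℕ) : Matrix (Fin N) (Fin N) ℝ :=
  fun i j => if i = j then 1
    else if (i : ℕ) = 0 ∨ (j : ℕ) = 0 then -(1 / √((N : ℝ) - 1)) else 0

/-- The normalized adjacency matrix of the star is `(e₀ 𝟙ᵀ + 𝟙 e₀ᵀ) / √(N - 1)`, with `e₀` the
centre and `𝟙` the indicator of the leaves. -/
lemma starNormalizedLaplacian_eq_one_sub (N : ℕ) :
    starNormalizedLaplacian N = 1 - (√((N : ℝ) - 1))⁻¹ •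
      (vecMulVec (starVec ℝ N 1 0) (starVec ℝ N 0 1) +
        vecMulVec (starVec ℝ N 0 1) (starVec ℝ N 1 0)) := by
  ext i j
  simp only [starNormalizedLaplacian, vecMulVec, starVec, Matrix.sub_apply, one_apply,
    Matrix.smul_apply, Matrix.add_apply, of_apply, smul_eq_mul, Fin.ext_iff]
  split_ifs <;> first | omega | ring

lemma starNormalizedLaplacian_mulVec_starVec (N : ℕ) (a b : ℝ) :
    starNormalizedLaplacian N *ᵥ starVec ℝ N a b =
      starVec ℝ N (a - √((N : ℝ) - 1) * b) (b - a / √((N : ℝ) - 1)) := by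
  rcases N.eq_zero_or_pos with rfl | hN
  · exact Subsingleton.elim _ _
  have : NeZero N := .of_pos hN
  rw [starNormalizedLaplacian_eq_one_sub, sub_mulVec, one_mulVec, smul_mulVec, add_mulVec,
    vecMulVec_mulVec, vecMulVec_mulVec, op_smul_eq_smul, op_smul_eq_smul,
    starVec_dotProduct_starVec, starVec_dotProduct_starVec]
  have hs : ((N : ℝ) - 1) / √((N : ℝ) - 1) = √((N : ℝ) - 1) := Real.div_sqrt
  ext i
  simp only [starVec, Pi.sub_apply, Pi.add_apply, Pi.smul_apply, smul_eq_mul]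
  split_ifs
  · linear_combination (-b) * hs
  · ring

lemma natCast_sub_one_pos {N : ℕ} (hN : 2 ≤ N) : 0 < (N : ℝ) - 1 := by
  have : (2 : ℝ) ≤ N := by exact_mod_cast hN
  linarith

lemma sqrt_natCast_sub_one_ne_zero {N : ℕ} (hN : 2 ≤ N) : √((N : ℝ) - 1) ≠ 0 :=
  (Real.sqrt_pos.mpr (natCast_sub_one_pos hN)).ne'

lemma starNormalizedLaplacian_mulVec_eigenvalue_zero {N : ℕ} (hN : 2 ≤ N) :
    starNormalizedLaplacian N *ᵥ starVec ℝ N 1 (√((N : ℝ) - 1))⁻¹ =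
      (0 : ℝ) • starVec ℝ N 1 (√((N : ℝ) - 1))⁻¹ := by
  have hs := sqrt_natCast_sub_one_ne_zero hN
  rw [starNormalizedLaplacian_mulVec_starVec, smul_starVec]
  congr 1 <;> field_simp <;> ring

lemma starNormalizedLaplacian_mulVec_eigenvalue_two {N : ℕ} (hN : 2 ≤ N) :
    starNormalizedLaplacian N *ᵥ starVec ℝ N 1 (-(√((N : ℝ) - 1))⁻¹) =
      (2 : ℝ) • starVec ℝ N 1 (-(√((N : ℝ) - 1))⁻¹) := by
  have hs := sqrt_natCast_sub_one_ne_zero hN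
  rw [starNormalizedLaplacian_mulVec_starVec, smul_starVec]
  congr 1 <;> field_simp <;> ring

/-- The diffusion state `e^{-tL} δ_{u₀}` is `starDiffusion N (e^{-2t})`. -/
noncomputable def starDiffusion (N : ℕ) (e : ℝ) : Fin N → ℝ :=
  starVec ℝ N ((1 + e) / 2) ((1 - e) / (2 * √((N : ℝ) - 1)))

lemma exp_neg_smul_starNormalizedLaplacian_mulVec_starVec_one_zero {N : ℕ} (hN : 2 ≤ N) (t : ℝ) :
    NormedSpace.exp ((-t) • starNormalizedLaplacian N) *ᵥ starVec ℝ N 1 0 =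
      starDiffusion N (Real.exp (-2 * t)) := by
  have hs := sqrt_natCast_sub_one_ne_zero hN
  have hcentre : starVec ℝ N 1 0 = (1 / 2 : ℝ) • starVec ℝ N 1 (√((N : ℝ) - 1))⁻¹ +
      (1 / 2 : ℝ) • starVec ℝ N 1 (-(√((N : ℝ) - 1))⁻¹) := by
    simp only [smul_starVec, starVec_add]
    congr 1 <;> ring
  have eigen {c : ℝ} {v : Fin N → ℝ} (h : starNormalizedLaplacian N *ᵥ v = c • v) :
      NormedSpace.exp ((-t) • starNormalizedLaplacian N) *ᵥ v = Real.exp (-c * t) • v := by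
    rw [Real.exp_eq_exp_ℝ, neg_mul_comm, mul_comm]
    exact exp_mulVec_of_mulVec_eq_smul (by rw [smul_mulVec, h, smul_smul])
  rw [hcentre, mulVec_add, mulVec_smul, mulVec_smul,
    eigen (starNormalizedLaplacian_mulVec_eigenvalue_zero hN),
    eigen (starNormalizedLaplacian_mulVec_eigenvalue_two hN)]
  simp only [starDiffusion, neg_zero, zero_mul, Real.exp_zero, smul_starVec, starVec_add]
  congr 1 <;> ring

lemma starVec_dotProduct_starNormalizedLaplacian_mulVec {N : ℕ} [NeZero N] (a b : ℝ) :
    starVec ℝ N a b ⬝ᵥ (starNormalizedLaplacian N *ᵥ starVec ℝ N a b) =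
      (a - √((N : ℝ) - 1) * b) ^ 2 := by
  have hN : (1 : ℝ) ≤ N := by exact_mod_cast NeZero.one_le
  have hs2 : √((N : ℝ) - 1) ^ 2 = N - 1 := Real.sq_sqrt (by linarith)
  have hs : ((N : ℝ) - 1) / √((N : ℝ) - 1) = √((N : ℝ) - 1) := Real.div_sqrt
  rw [starNormalizedLaplacian_mulVec_starVec, starVec_dotProduct_starVec]
  linear_combination (-(a * b)) * hs - b ^ 2 * hs2

section Diffusion
variable {N : ℕ} (e : ℝ)

lemma sum_starDiffusion_sq (hN : 2 ≤ N) : ∑ i, starDiffusion N e i ^ 2 = (1 + e ^ 2) / 2 := by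
  have : NeZero N := ⟨by omega⟩
  have hN1 := (natCast_sub_one_pos hN).ne'
  have hs2 : √((N : ℝ) - 1) ^ 2 = N - 1 := Real.sq_sqrt (natCast_sub_one_pos hN).le
  rw [starDiffusion, sum_starVec_sq]
  field_simp
  rw [hs2]
  field_simp
  ring

lemma starDiffusion_dotProduct_starNormalizedLaplacian_mulVec (hN : 2 ≤ N) :
    starDiffusion N e ⬝ᵥ (starNormalizedLaplacian N *ᵥ starDiffusion N e) = e ^ 2 := by
  have : NeZero N := ⟨by omega⟩
  have hs := sqrt_natCast_sub_one_ne_zero hN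
  rw [starDiffusion, starVec_dotProduct_starNormalizedLaplacian_mulVec]
  field_simp
  ring

lemma starDiffusion_dotProduct_diagonal_mulVec (hN : 2 ≤ N) :
    starDiffusion N e ⬝ᵥ (diagonal (starVec ℝ N 0 1) *ᵥ starDiffusion N e) = (1 - e) ^ 2 / 4 := by
  have : NeZero N := ⟨by omega⟩
  have hN1 := (natCast_sub_one_pos hN).ne'
  have hs2 : √((N : ℝ) - 1) ^ 2 = N - 1 := Real.sq_sqrt (natCast_sub_one_pos hN).le
  rw [starDiffusion, diagonal_starVec_mulVec_starVec, starVec_dotProduct_starVec]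
  field_simp
  rw [hs2]
  field_simp
  ring

end Diffusion

def StarUncertaintyCurve (s g : ℝ) : Prop :=
  (s - 1) ^ 2 + (2 * g - 1) ^ 2 = 1

lemma starUncertaintyCurve_diffusion (e : ℝ) :
    StarUncertaintyCurve (2 * e ^ 2 / (1 + e ^ 2)) ((1 - e) ^ 2 / (2 * (1 + e ^ 2))) := by
  unfold StarUncertaintyCurve
  have : 1 + e ^ 2 ≠ 0 := by positivity
  field_simp
  ring

/-- For the diffusion `x(t) = e^{-tL} δ_{u0}` on the star graph on `N ≥ 3` vertices
with `u0` the center (vertex 0), `x(t) = [(1+e^{-2t})/2, (1-e^{-2t})/(2√(N-1)), …]`,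
the spreads are `Δs = 2e^{-4t}/(1+e^{-4t})` and `Δg = (1-e^{-2t})²/(2(1+e^{-4t}))`, and
they satisfy `(Δs-1)² + (2Δg-1)² = 1`, i.e. the diffusion exactly achieves the
star-graph uncertainty curve for all `t ≥ 0`. -/
theorem stmt17 {N : ℕ} (hN : 3 ≤ N)
    (L : Matrix (Fin N) (Fin N) ℝ)
    (hL : L = fun (i j : Fin N) => if i = j then (1 : ℝ)
      else if (i : ℕ) = 0 ∨ (j : ℕ) = 0 then -(1 / Real.sqrt ((N : ℝ) - 1)) else 0)
    (P2 : Matrix (Fin N) (Fin N) ℝ)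
    (hP2 : P2 = Matrix.diagonal (fun i : Fin N => if (i : ℕ) = 0 then (0 : ℝ) else 1))
    (u0 : Fin N) (hu0 : (u0 : ℕ) = 0)
    (δ : Fin N → ℝ) (hδ : δ = Pi.single u0 1)
    (x : ℝ → Fin N → ℝ)
    (hx : ∀ t : ℝ, x t = (NormedSpace.exp ((-t) • L)) *ᵥ δ) :
    ∀ t : ℝ, 0 ≤ t →
      (x t = fun i : Fin N => if (i : ℕ) = 0
          then (1 + Real.exp (-2 * t)) / 2
          else (1 - Real.exp (-2 * t)) / (2 * Real.sqrt ((N : ℝ) - 1))) ∧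
      (x t ⬝ᵥ (L *ᵥ x t)) / (∑ i, (x t i) ^ 2) =
        2 * Real.exp (-4 * t) / (1 + Real.exp (-4 * t)) ∧
      (x t ⬝ᵥ (P2 *ᵥ x t)) / (∑ i, (x t i) ^ 2) =
        (1 - Real.exp (-2 * t)) ^ 2 / (2 * (1 + Real.exp (-4 * t))) ∧
      (let s : ℝ := (x t ⬝ᵥ (L *ᵥ x t)) / (∑ i, (x t i) ^ 2)
       let g : ℝ := (x t ⬝ᵥ (P2 *ᵥ x t)) / (∑ i, (x t i) ^ 2)
       (s - 1) ^ 2 + (2 * g - 1) ^ 2 = 1) := by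
  intro t _
  have hL' : L = starNormalizedLaplacian N := hL
  have hP2' : P2 = diagonal (starVec ℝ N 0 1) := hP2
  set e := Real.exp (-2 * t) with he
  have he2 : Real.exp (-4 * t) = e ^ 2 := by rw [he, sq, ← Real.exp_add]; ring_nf
  have hxt : x t = starDiffusion N e := by
    rw [hx, hL', hδ, pi_single_eq_starVec hu0,
      exp_neg_smul_starNormalizedLaplacian_mulVec_starVec_one_zero (by omega)]
  have hnorm : ∑ i, x t i ^ 2 = (1 + e ^ 2) / 2 := hxt ▸ sum_starDiffusion_sq e (by omega)
  have hspread_s : x t ⬝ᵥ (L *ᵥ x t) / ∑ i, x t i ^ 2 = 2 * e ^ 2 / (1 + e ^ 2) := by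
    rw [hnorm, hxt, hL', starDiffusion_dotProduct_starNormalizedLaplacian_mulVec e (by omega)]
    field_simp
  have hspread_g : x t ⬝ᵥ (P2 *ᵥ x t) / ∑ i, x t i ^ 2 = (1 - e) ^ 2 / (2 * (1 + e ^ 2)) := by
    rw [hnorm, hxt, hP2', starDiffusion_dotProduct_diagonal_mulVec e (by omega)]
    field_simp; ring
  refine ⟨hxt, he2 ▸ hspread_s, he2 ▸ hspread_g, ?_⟩
  simp only [hspread_s, hspread_g]
  exact starUncertaintyCurve_diffusion e
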